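/- Let (G_ω, v) be a weighted star graph with center v and vertex set {x_1,…,x_n}, let I(G_ω) ⊆ R = K[x_1,…,x_n] be its weighted edge ideal, and let m > μ(v), where μ(v) = max{ω(vy) ∣ y ∈ N_G(v)}. Then the maximal graded ideal 𝔪 = (x_1,…,x_n) is an associated prime of the ideal (v^m, I(G_ω)). -/

import Mathlib

open SimpleGraph

noncomputable section

variable {V : Type*}

/-- `p 0, p 1, …, p k` is a simple path in `G`: the vertices are pairwise distinct and
consecutive vertices are adjacent. -/
def IsSimplePathOn (G : SimpleGraph V) (p : ℕ → V) (k : ℕ) : Prop :=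
  (∀ i ≤ k, ∀ j ≤ k, p i = p j → i = j) ∧ ∀ i < k, G.Adj (p i) (p (i + 1))

/-- The path `p 0, …, p k` is increasing for the weight `ω`. -/
def IsIncreasingPath (ω : V → V → ℕ) (p : ℕ → V) (k : ℕ) : Prop :=
  ∀ i, i + 2 ≤ k → ω (p i) (p (i + 1)) ≤ ω (p (i + 1)) (p (i + 2))

/-- A leaf is a vertex of degree one. -/
def IsLeafVertex (G : SimpleGraph V) (x : V) : Prop := ∃! y, G.Adj x y

/-- `(G_ω, v)` is an increasing weighted tree with root `v`: `G` is a tree and every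
simple path from a leaf to `v` is increasing. -/
def IsIncreasingWeightedTree (G : SimpleGraph V) (ω : V → V → ℕ) (v : V) : Prop :=
  G.IsTree ∧ ∀ (p : ℕ → V) (k : ℕ), IsSimplePathOn G p k → IsLeafVertex G (p 0) → p k = v →
    IsIncreasingPath ω p k

open MvPolynomial

/-- The weighted edge ideal `I(G_ω) = ((x_i x_j)^{ω(x_i x_j)} ∣ x_i x_j ∈ E(G))`. -/
def weightedEdgeIdeal (n : ℕ) (K : Type*) [Field K]
    (G : SimpleGraph (Fin n)) (ω : Fin n → Fin n → ℕ) : Ideal (MvPolynomial (Fin n) K) :=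
  Ideal.span {f | ∃ i j : Fin n, G.Adj i j ∧ f = (X i * X j) ^ ω i j}

/-- The maximal graded ideal `𝔪 = (x_1, …, x_n)`. -/
def maxGradedIdeal (n : ℕ) (K : Type*) [Field K] : Ideal (MvPolynomial (Fin n) K) :=
  Ideal.span (Set.range (X : Fin n → MvPolynomial (Fin n) K))

/-- `μ(x) = max { ω(xy) ∣ y ∈ N_G(x) }`. -/
def muWt (G : SimpleGraph V) (ω : V → V → ℕ) (x : V) : ℕ :=
  sSup {w | ∃ y, G.Adj x y ∧ w = ω x y}

/-- `G` is a star graph with center `v`: a tree all of whose edges are incident to `v`. -/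
def IsStarWithCenter (G : SimpleGraph V) (v : V) : Prop :=
  G.IsTree ∧ ∀ a b, G.Adj a b → a = v ∨ b = v

/-!
The witness is the monomial `f = v^(m-1) ∏_{y ≠ v} y^(ω(vy)-1)`. No generator of
`J = (v^m, I(G_ω))` divides `f`: every edge of a star contains `v`, and `f` falls one short in
the exponent of the other endpoint. On the other hand `v f` is divisible by `v^m`, and for
`y ≠ v` the monomial `y f` is divisible by `(v y)^ω(vy)` because `ω(vy) ≤ μ(v) ≤ m - 1`.
So `𝔪 ⊆ (J : f) ≠ R`, and maximality of `𝔪` gives `𝔪 = (J : f)`.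
-/
theorem Ideal.IsMaximal.mem_associatedPrimes_quotient {R : Type*} [CommRing R] {M J : Ideal R}
    (hM : M.IsMaximal) {f : R} (hf : f ∉ J) (hMf : M ≤ J.colon {f}) :
    M ∈ associatedPrimes R (R ⧸ J) := by
  have hcolon : (⊥ : Submodule R (R ⧸ J)).colon {Ideal.Quotient.mk J f} = J.colon {f} := by
    ext r
    rw [Submodule.mem_colon_singleton, Submodule.mem_colon_singleton, Submodule.mem_bot,
      smul_eq_mul, ← Ideal.Quotient.eq_zero_iff_mem, map_mul]
    rfl
  refine ⟨hM.isPrime, Ideal.Quotient.mk J f, hM.eq_of_le ?_ (hMf.trans ?_)⟩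
  · rw [Ne, Ideal.radical_eq_top, hcolon, Ideal.eq_top_iff_one, Submodule.mem_colon_singleton,
      one_smul]
    exact hf
  · exact hcolon ▸ Ideal.le_radical

namespace MvPolynomial

variable {σ R : Type*} [CommSemiring R]

theorem idealOfVars_eq_ker_constantCoeff :
    idealOfVars σ R = RingHom.ker (constantCoeff : MvPolynomial σ R →+* R) := by
  ext p
  rw [← pow_one (idealOfVars σ R), mem_pow_idealOfVars_iff', RingHom.mem_ker, constantCoeff_eq]
  simp [Finsupp.degree_eq_zero_iff]

theorem idealOfVars_isMaximal {K : Type*} [Field K] : (idealOfVars σ K).IsMaximal := by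
  rw [idealOfVars_eq_ker_constantCoeff]
  exact RingHom.ker_isMaximal_of_surjective _ fun r => ⟨C r, constantCoeff_C σ r⟩

theorem monomial_one_mem_span_monomial_image_iff [Nontrivial R] {S : Set (σ →₀ ℕ)}
    {d : σ →₀ ℕ} :
    monomial d (1 : R) ∈ Ideal.span ((fun s => monomial s (1 : R)) '' S) ↔ ∃ s ∈ S, s ≤ d := by
  classical
  simp [mem_ideal_span_monomial_image, support_monomial]

end MvPolynomial

open MvPolynomial

theorem Finsupp.single_add_single_le_iff {ι : Type*} {i j : ι} (hij : i ≠ j) {w : ℕ}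
    {d : ι →₀ ℕ} : single i w + single j w ≤ d ↔ w ≤ d i ∧ w ≤ d j := by
  classical
  refine ⟨fun h => ⟨?_, ?_⟩, fun ⟨hi, hj⟩ s => ?_⟩
  · simpa [hij] using h i
  · simpa [hij.symm] using h j
  · by_cases hs : s = i <;> by_cases hs' : s = j <;> simp_all

section WeightedEdgeIdeal

variable {σ : Type*}

def edgeExponents (G : SimpleGraph σ) (ω : σ → σ → ℕ) : Set (σ →₀ ℕ) :=
  {e | ∃ i j, G.Adj i j ∧ e = Finsupp.single i (ω i j) + Finsupp.single j (ω i j)}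

theorem weightedEdgeIdeal_eq_span_monomial {n : ℕ} (K : Type*) [Field K]
    (G : SimpleGraph (Fin n)) (ω : Fin n → Fin n → ℕ) :
    weightedEdgeIdeal n K G ω =
      Ideal.span ((fun s => monomial s (1 : K)) '' edgeExponents G ω) := by
  simp only [weightedEdgeIdeal, edgeExponents]
  congr 1
  ext f
  simp [mul_pow, X_pow_eq_monomial, monomial_mul, eq_comm]

theorem le_muWt [Finite σ] {G : SimpleGraph σ} (ω : σ → σ → ℕ) {x y : σ} (h : G.Adj x y) :
    ω x y ≤ muWt G ω x := by
  have hsub : {w | ∃ y, G.Adj x y ∧ w = ω x y} ⊆ Set.range (ω x) :=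
    fun _ ⟨z, _, hz⟩ => ⟨z, hz.symm⟩
  exact le_csSup ((Set.finite_range (ω x)).subset hsub).bddAbove ⟨y, h, rfl⟩

namespace IsStarWithCenter

variable {G : SimpleGraph σ} {v : σ}

theorem adj_center (hG : IsStarWithCenter G v) {i : σ} (hi : i ≠ v) : G.Adj v i := by
  obtain ⟨w⟩ := hG.1.connected.preconnected i v
  cases w with
  | nil => exact absurd rfl hi
  | cons h _ => exact ((hG.2 _ _ h).resolve_left hi ▸ h).symm

theorem not_le_of_lt_weight (hG : IsStarWithCenter G v) {ω : σ → σ → ℕ}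
    (hsym : ∀ a b, ω a b = ω b a) {m : ℕ} {d : σ →₀ ℕ} (hdv : d v < m)
    (hd : ∀ i ≠ v, d i < ω v i) :
    ∀ e ∈ insert (Finsupp.single v m) (edgeExponents G ω), ¬ e ≤ d := by
  rintro _ (rfl | ⟨i, j, hij, rfl⟩) hle
  · exact hdv.not_ge (Finsupp.single_le_iff.1 hle)
  · obtain ⟨hi, hj⟩ := (Finsupp.single_add_single_le_iff hij.ne).1 hle
    rcases hG.2 i j hij with rfl | rfl
    · exact (hd j hij.ne').not_ge hj
    · exact (hd i hij.ne).not_ge (hsym i _ ▸ hi)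

theorem exists_le_single_add [Finite σ] (hG : IsStarWithCenter G v) {ω : σ → σ → ℕ} {m : ℕ}
    (hm : muWt G ω v < m) {d : σ →₀ ℕ} (hdv : d v + 1 = m) (hd : ∀ i ≠ v, d i + 1 = ω v i)
    (k : σ) :
    ∃ e ∈ insert (Finsupp.single v m) (edgeExponents G ω), e ≤ Finsupp.single k 1 + d := by
  classical
  rcases eq_or_ne k v with rfl | hk
  · refine ⟨_, Set.mem_insert _ _, Finsupp.single_le_iff.2 ?_⟩
    simp only [Finsupp.add_apply, Finsupp.single_eq_same]
    omega
  · have hvk := hG.adj_center hk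
    refine ⟨_, Set.mem_insert_of_mem _ ⟨v, k, hvk, rfl⟩,
      (Finsupp.single_add_single_le_iff hk.symm).2 ⟨?_, ?_⟩⟩
    · have := le_muWt ω hvk
      simp only [Finsupp.add_apply, Finsupp.single_eq_of_ne hk.symm]
      omega
    · simp only [Finsupp.add_apply, Finsupp.single_eq_same]
      have := hd k hk
      omega

end IsStarWithCenter

end WeightedEdgeIdeal

/-- Lemma 2.5: if `(G_ω, v)` is a weighted star graph with center `v`
and `m > μ(v)`, then `𝔪 = (x_1, …, x_n)` is an associated prime of `(v^m, I(G_ω))`. -/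
theorem maxIdeal_associated_star {n : ℕ} (K : Type*) [Field K]
    (G : SimpleGraph (Fin n)) (ω : Fin n → Fin n → ℕ)
    (hsym : ∀ a b, ω a b = ω b a) (hpos : ∀ a b, G.Adj a b → 0 < ω a b)
    (v : Fin n) (hG : IsStarWithCenter G v)
    (m : ℕ) (hm : muWt G ω v < m) :
    maxGradedIdeal n K ∈
      associatedPrimes (MvPolynomial (Fin n) K)
        (MvPolynomial (Fin n) K ⧸
          (Ideal.span {(X v : MvPolynomial (Fin n) K) ^ m} ⊔ weightedEdgeIdeal n K G ω)) := by
  classical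
  set d : Fin n →₀ ℕ :=
    Finsupp.equivFunOnFinite.symm fun i => if i = v then m - 1 else ω v i - 1
  have hdv : d v + 1 = m := by
    simp only [d, Finsupp.equivFunOnFinite_symm_apply_apply, if_pos]
    omega
  have hd (i : Fin n) (hi : i ≠ v) : d i + 1 = ω v i := by
    have := hpos _ _ (hG.adj_center hi)
    simp only [d, Finsupp.equivFunOnFinite_symm_apply_apply, if_neg hi]
    omega
  have hJ : Ideal.span {(X v : MvPolynomial (Fin n) K) ^ m} ⊔ weightedEdgeIdeal n K G ω =
      Ideal.span ((fun s => monomial s (1 : K)) ''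
        insert (Finsupp.single v m) (edgeExponents G ω)) := by
    rw [weightedEdgeIdeal_eq_span_monomial, Set.image_insert_eq, Ideal.span_insert,
      X_pow_eq_monomial]
  have hM : (maxGradedIdeal n K).IsMaximal := idealOfVars_isMaximal
  refine hM.mem_associatedPrimes_quotient (f := monomial d 1) ?_ ?_
  · rw [hJ, monomial_one_mem_span_monomial_image_iff]
    rintro ⟨e, he, hle⟩
    exact hG.not_le_of_lt_weight hsym (hdv ▸ lt_add_one _) (fun i hi => hd i hi ▸ lt_add_one _)
      e he hle
  · rw [maxGradedIdeal, Ideal.span_le, Set.range_subset_iff]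
    intro k
    rw [SetLike.mem_coe, Submodule.mem_colon_singleton, smul_eq_mul, ← pow_one (X k),
      ← monomial_single_add, hJ, monomial_one_mem_span_monomial_image_iff]
    exact hG.exists_le_single_add hm hdv hd k
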